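/- arXiv:1811.10542 — 2 statements merged into one kernel-verified Lean document; each statement's English description precedes it below -/
import Mathlib

section
/- Let β be a real d×d matrix and let L be the ℂ-linear operator on the space of complex symmetric d×d matrices defined by L(M) = βM + Mβ^⊤. Then the set of eigenvalues of L equals {λ + μ : λ, μ ∈ σ(β)}, where σ(β) denotes the set of complex eigenvalues of β. In particular, max{Re ν : ν eigenvalue of L} = 2·max{Re λ : λ ∈ σ(β)}, so all eigenvalues of L have strictly negative real part if and only if all eigenvalues of β do. -/
open Matrix

noncomputable section

/-- The set of complex eigenvalues of a real square matrix `β`, i.e. the eigenvalues of `β`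
regarded as a matrix over `ℂ`. -/
def matCSpectrum {d : ℕ} (β : Matrix (Fin d) (Fin d) ℝ) : Set ℂ :=
  {z : ℂ | ∃ x : Fin d → ℂ, x ≠ 0 ∧ (β.map (Complex.ofReal)).mulVec x = z • x}

/-- The set of eigenvalues of the operator `M ↦ βM + Mβᵀ` on the space of complex symmetric
`d×d` matrices: `ν` is an eigenvalue iff it has a nonzero symmetric eigenmatrix. -/
def lyapSpectrum {d : ℕ} (β : Matrix (Fin d) (Fin d) ℝ) : Set ℂ :=
  {ν : ℂ | ∃ M : Matrix (Fin d) (Fin d) ℂ, Mᵀ = M ∧ M ≠ 0 ∧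
      (β.map Complex.ofReal) * M + M * (β.map Complex.ofReal)ᵀ = ν • M}

/-!
If `βM + Mβᵀ = νM` with `M ≠ 0`, then `βM = M(ν - βᵀ)`, and an intertwining `AM = MB` with
`M ≠ 0` forces `A` and `B` to share an eigenvalue (evaluate the characteristic polynomial of `B`
at both sides: `χ_B(A) M = 0`, so `χ_B(A)` is singular, and by spectral mapping some eigenvalue
of `A` is a root of `χ_B`). Since `σ(ν - βᵀ) = ν - σ(β)`, this gives `ν ∈ σ(β) + σ(β)`.
Conversely, eigenvectors `βx = λx`, `βy = μy` give the symmetric eigenmatrix `xyᵀ + yxᵀ` with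
eigenvalue `λ + μ`. The statements about real parts follow since `σ(β)` is finite.
-/

open Polynomial
open scoped Pointwise

theorem Polynomial.aeval_mul_eq_mul_aeval {R A : Type*} [CommSemiring R] [Semiring A]
    [Algebra R A] {a b m : A} (h : a * m = m * b) (p : R[X]) :
    aeval a p * m = m * aeval b p := by
  induction p using Polynomial.induction_on' with
  | add p q hp hq => simp only [map_add, add_mul, mul_add, hp, hq]
  | monomial k c =>
    rw [aeval_monomial, aeval_monomial, mul_assoc, ← (SemiconjBy.pow_right h.symm k).eq,
      ← mul_assoc, ← mul_assoc, Algebra.commutes]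

namespace Matrix

section Field

variable {n K : Type*} [Fintype n] [DecidableEq n] [Field K]

theorem mem_spectrum_iff_exists_mulVec_eq_smul (A : Matrix n n K) (z : K) :
    z ∈ spectrum K A ↔ ∃ x ≠ 0, A *ᵥ x = z • x := by
  rw [spectrum.mem_iff, isUnit_iff_isUnit_det, isUnit_iff_ne_zero, not_not,
    ← exists_mulVec_eq_zero_iff]
  simp only [Algebra.algebraMap_eq_smul_one, sub_mulVec, smul_mulVec, one_mulVec,
    sub_eq_zero, eq_comm]

theorem spectrum_transpose (A : Matrix n n K) : spectrum K Aᵀ = spectrum K A := by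
  ext z
  simp only [mem_spectrum_iff_isRoot_charpoly, charpoly_transpose]

theorem exists_mem_spectrum_of_mul_eq_mul [IsAlgClosed K] {A B M : Matrix n n K}
    (h : A * M = M * B) (hM : M ≠ 0) : ∃ μ ∈ spectrum K A, μ ∈ spectrum K B := by
  have : Nonempty n := by
    by_contra hn
    exact hM (ext fun i => (hn ⟨i⟩).elim)
  have hzero : aeval A B.charpoly * M = 0 := by
    rw [aeval_mul_eq_mul_aeval h, aeval_self_charpoly, mul_zero]
  have hsingular : (0 : K) ∈ spectrum K (aeval A B.charpoly) := by
    rw [spectrum.zero_mem_iff]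
    exact fun hu => hM (hu.mul_left_cancel (hzero.trans (mul_zero _).symm))
  rw [spectrum.map_polynomial_aeval_of_degree_pos _ _
    (by simp [B.charpoly_degree_eq_dim, Fintype.card_pos])] at hsingular
  obtain ⟨μ, hμ, hroot⟩ := hsingular
  exact ⟨μ, hμ, mem_spectrum_iff_isRoot_charpoly.2 hroot⟩

theorem mem_spectrum_add_spectrum_of_mul_add_mul_transpose_eq_smul [IsAlgClosed K]
    {A M : Matrix n n K} {ν : K} (hM : M ≠ 0) (h : A * M + M * Aᵀ = ν • M) :
    ν ∈ spectrum K A + spectrum K A := by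
  have hAM : A * M = M * (algebraMap K _ ν - Aᵀ) := by
    rw [mul_sub, Algebra.algebraMap_eq_smul_one, mul_smul_comm, mul_one, ← h]
    abel
  obtain ⟨μ, hμA, hμ⟩ := exists_mem_spectrum_of_mul_eq_mul hAM hM
  rw [← spectrum.singleton_sub_eq, spectrum_transpose] at hμ
  obtain ⟨ν, rfl, κ, hκ, rfl⟩ := hμ
  exact ⟨ν - κ, hμA, κ, hκ, sub_add_cancel ν κ⟩

end Field

theorem vecMulVec_add_vecMulVec_ne_zero {n R : Type*} [CommRing R] [NoZeroDivisors R]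
    [NeZero (2 : R)] {x y : n → R} (hx : x ≠ 0) (hy : y ≠ 0) :
    vecMulVec x y + vecMulVec y x ≠ 0 := by
  obtain ⟨i, hi⟩ := Function.ne_iff.1 hx
  obtain ⟨j, hj⟩ := Function.ne_iff.1 hy
  intro h
  have entry : ∀ k l, x k * y l + y k * x l = 0 := fun k l => by
    simpa [vecMulVec_apply] using congrFun (congrFun h k) l
  have diag : ∀ k, x k * y k = 0 := fun k => by
    simpa [mul_comm (y k), ← two_mul, two_ne_zero] using entry k k
  have hyi : y i = 0 := (mul_eq_zero.1 (diag i)).resolve_left hi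
  have hxj : x j = 0 := (mul_eq_zero.1 (diag j)).resolve_right hj
  exact mul_ne_zero hi hj (by simpa [hyi, hxj] using entry i j)

theorem mul_add_mul_transpose_eq_smul_of_mulVec_eq_smul {n R : Type*} [Fintype n] [CommRing R]
    (A : Matrix n n R) {x y : n → R} {l m : R} (hx : A *ᵥ x = l • x) (hy : A *ᵥ y = m • y) :
    A * (vecMulVec x y + vecMulVec y x) + (vecMulVec x y + vecMulVec y x) * Aᵀ =
      (l + m) • (vecMulVec x y + vecMulVec y x) := by
  simp only [mul_add, add_mul, mul_vecMulVec, vecMulVec_mul, vecMul_transpose, hx, hy,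
    smul_vecMulVec, vecMulVec_smul]
  module

end Matrix

theorem Real.sSup_add_self {s : Set ℝ} (hs : BddAbove s) : sSup (s + s) = 2 * sSup s := by
  rcases s.eq_empty_or_nonempty with rfl | hne
  · simp
  · rw [csSup_add hne hs hne hs, two_mul]

theorem Complex.forall_mem_add_self_re_neg_iff (S : Set ℂ) :
    (∀ ν ∈ S + S, ν.re < 0) ↔ ∀ z ∈ S, z.re < 0 := by
  constructor
  · intro h z hz
    have := h (z + z) (Set.add_mem_add hz hz)
    rw [Complex.add_re] at this
    linarith
  · rintro h _ ⟨l, hl, m, hm, rfl⟩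
    rw [Complex.add_re]
    linarith [h l hl, h m hm]

theorem matCSpectrum_eq_spectrum {d : ℕ} (β : Matrix (Fin d) (Fin d) ℝ) :
    matCSpectrum β = spectrum ℂ (β.map Complex.ofReal) := by
  ext z
  exact (mem_spectrum_iff_exists_mulVec_eq_smul _ z).symm

theorem lyapSpectrum_eq_add {d : ℕ} (β : Matrix (Fin d) (Fin d) ℝ) :
    lyapSpectrum β = matCSpectrum β + matCSpectrum β := by
  rw [matCSpectrum_eq_spectrum]
  ext ν
  constructor
  · rintro ⟨M, -, hM, h⟩
    exact mem_spectrum_add_spectrum_of_mul_add_mul_transpose_eq_smul hM h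
  · rintro ⟨l, hl, m, hm, rfl⟩
    obtain ⟨x, hx, hxl⟩ := (mem_spectrum_iff_exists_mulVec_eq_smul _ l).1 hl
    obtain ⟨y, hy, hym⟩ := (mem_spectrum_iff_exists_mulVec_eq_smul _ m).1 hm
    exact ⟨vecMulVec x y + vecMulVec y x, by simp [transpose_vecMulVec, add_comm],
      vecMulVec_add_vecMulVec_ne_zero hx hy,
      mul_add_mul_transpose_eq_smul_of_mulVec_eq_smul _ hxl hym⟩

/-- The eigenvalues of `L(M) = βM + Mβᵀ` on complex symmetric matrices are exactly the sums
of pairs of eigenvalues of `β`; in particular the maximal real part doubles and `L` is stable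
iff `β` is. -/
theorem lyapSpectrum_eq_sum_spectrum {d : ℕ} (β : Matrix (Fin d) (Fin d) ℝ) :
    lyapSpectrum β = {ν : ℂ | ∃ l ∈ matCSpectrum β, ∃ m ∈ matCSpectrum β, ν = l + m} ∧
    sSup (Complex.re '' lyapSpectrum β) = 2 * sSup (Complex.re '' matCSpectrum β) ∧
    ((∀ ν ∈ lyapSpectrum β, ν.re < 0) ↔ ∀ z ∈ matCSpectrum β, z.re < 0) := by
  have hfinite : (matCSpectrum β).Finite := by
    rw [matCSpectrum_eq_spectrum]
    exact finite_spectrum _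
  rw [lyapSpectrum_eq_add]
  refine ⟨?_, ?_, Complex.forall_mem_add_self_re_neg_iff _⟩
  · ext ν
    simp only [Set.mem_add, Set.mem_ofPred_eq, eq_comm]
  · exact (congrArg sSup (Set.image_add Complex.reAddGroupHom)).trans
      (Real.sSup_add_self (hfinite.image _).bddAbove)

end
end

section
/- Let V be a finite-dimensional real inner product space, K ⊆ V a generating proper closed convex cone, and A : V → V a linear map. Then A is quasimonotone increasing with respect to K if and only if for every real λ > τ(A) the map λ·id − A^⊤ is invertible and (λ·id − A^⊤)^{-1}(K*) ⊆ K*. -/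
open scoped RealInnerProductSpace

noncomputable section

variable {V : Type*} [NormedAddCommGroup V] [InnerProductSpace ℝ V]

/-- The dual cone of a set `K` in a real inner product space. -/
def dualCone (K : Set V) : Set V := {u : V | ∀ x ∈ K, 0 ≤ ⟪u, x⟫}

/-- `K` is a generating proper closed convex cone. -/
structure IsGenProperClosedConvexCone (K : Set V) : Prop where
  closed : IsClosed K
  convex : Convex ℝ K
  smul_mem : ∀ c : ℝ, 0 ≤ c → ∀ x ∈ K, c • x ∈ K
  generating : ∀ v : V, ∃ x ∈ K, ∃ y ∈ K, v = x - y
  proper : ∀ x ∈ K, -x ∈ K → x = 0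

/-- `A` is quasimonotone increasing with respect to the cone `K`. -/
def IsQMI (K : Set V) (A : V →ₗ[ℝ] V) : Prop :=
  ∀ x ∈ K, ∀ v ∈ dualCone K, ⟪v, x⟫ = 0 → 0 ≤ ⟪v, A x⟫

variable [FiniteDimensional ℝ V]

/-- The set of complex eigenvalues of a real linear map, i.e. the complex roots of its
characteristic polynomial. -/
def cSpectrum (A : V →ₗ[ℝ] V) : Set ℂ :=
  {z : ℂ | Polynomial.aeval z (LinearMap.charpoly A) = 0}

/-- The spectral bound `τ(A)`. -/
def specBound (A : V →ₗ[ℝ] V) : ℝ := sSup (Complex.re '' cSpectrum A)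

/-- The spectral radius `ρ(A)`. -/
def specRadius (A : V →ₗ[ℝ] V) : ℝ := sSup ((fun z : ℂ => ‖z‖) '' cSpectrum A)

/-! Write `R(λ) = (λ - A)⁻¹`. Since `⟪R(λ)ᵀ v, x⟫ = ⟪v, R(λ) x⟫`, the forward direction amounts to
`R(λ) K ⊆ K` for all `λ > τ(A)`. For `λ > ‖A‖` this comes from quasimonotonicity: if
`(λ - A) y ∈ K` and `p` is the nearest point of `K` to `y`, then `v = p - y ∈ K*` with
`⟪v, p⟫ = 0`, and testing `(λ - A) y` against `v` gives `(λ - ‖A‖) ‖v‖² ≤ 0`. Given `b > τ(A)`,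
the set of `λ ≥ b` with `R(λ) K ⊆ K` is closed, and the Neumann series
`R(λ - c) = ∑ cⁿ R(λ)ⁿ⁺¹` extends it below its least element unless that element is `b`.
Conversely, `u = λ R(λ)ᵀ v ∈ K*` tends to `v` as `λ → ∞`, and `⟪u, A x⟫ = λ ⟪u, x⟫ ≥ 0`
whenever `⟪v, x⟫ = 0`. -/

open Set Filter Topology spectrum

namespace IsGenProperClosedConvexCone

variable {E : Type*} [NormedAddCommGroup E] [InnerProductSpace ℝ E] {K : Set E}

def toProperCone (hK : IsGenProperClosedConvexCone K) : ProperCone ℝ E where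
  carrier := K
  add_mem' {x y} hx hy := by
    simpa [smul_add, smul_smul] using
      hK.smul_mem 2 zero_le_two _ (hK.convex hx hy (by norm_num : (0 : ℝ) ≤ 1 / 2)
        (by norm_num : (0 : ℝ) ≤ 1 / 2) (by norm_num))
  zero_mem' := by
    obtain ⟨x, hx, -⟩ := hK.generating 0
    simpa using hK.smul_mem 0 le_rfl x hx
  smul_mem' c x hx := hK.smul_mem c c.2 x hx
  isClosed' := hK.closed

end IsGenProperClosedConvexCone

section NormedSpace

variable {E : Type*} [NormedAddCommGroup E] [NormedSpace ℝ E]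

namespace ProperCone

def nonnegOperators (C : ProperCone ℝ E) : ProperCone ℝ (E →L[ℝ] E) where
  carrier := {T | MapsTo T C C}
  add_mem' hS hT _ hx := C.add_mem (hS hx) (hT hx)
  zero_mem' _ _ := C.zero_mem
  smul_mem' c _ hT _ hx := C.smul_mem (hT hx) c.2
  isClosed' := by
    simp only [MapsTo, ofPred_forall]
    exact isClosed_biInter fun x _ => C.isClosed.preimage (continuous_eval_const x)

variable {C : ProperCone ℝ E} {S T : E →L[ℝ] E}

lemma mul_mem_nonnegOperators (hS : S ∈ C.nonnegOperators) (hT : T ∈ C.nonnegOperators) :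
    S * T ∈ C.nonnegOperators :=
  hS.comp hT

lemma pow_mem_nonnegOperators (hT : T ∈ C.nonnegOperators) (n : ℕ) :
    T ^ n ∈ C.nonnegOperators := by
  induction n with
  | zero => exact mapsTo_id _
  | succ n ih => exact pow_succ T n ▸ mul_mem_nonnegOperators ih hT

end ProperCone

lemma ContinuousLinearMap.bijective_and_forall_mem_iff_mapsTo_inv (u : (E →L[ℝ] E)ˣ)
    (S : Set E) :
    (Function.Bijective ⇑(u : E →L[ℝ] E) ∧ ∀ v, (u : E →L[ℝ] E) v ∈ S → v ∈ S) ↔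
      MapsTo ⇑(↑u⁻¹ : E →L[ℝ] E) S S := by
  have hinv (x : E) : (↑u⁻¹ : E →L[ℝ] E) ((u : E →L[ℝ] E) x) = x := congr($(u.inv_mul) x)
  have hinv' (x : E) : (u : E →L[ℝ] E) ((↑u⁻¹ : E →L[ℝ] E) x) = x := congr($(u.mul_inv) x)
  refine ⟨fun h x hx => h.2 _ (by rwa [hinv']), fun h => ⟨?_, fun v hv => hinv v ▸ h hv⟩⟩
  exact Function.bijective_iff_has_inverse.2 ⟨_, hinv, hinv'⟩

variable {C : ProperCone ℝ E} {a : E →L[ℝ] E} {l : ℝ}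

lemma smul_sub_apply_resolvent_apply (hl : l ∈ resolventSet ℝ a) (x : E) :
    l • resolvent a l x - a (resolvent a l x) = x := by
  simpa [resolvent, Algebra.algebraMap_eq_smul_one] using
    congr($(Ring.mul_inverse_cancel _ (mem_resolventSet_iff.mp hl)) x)

variable [CompleteSpace E]

lemma ContinuousLinearMap.mem_resolventSet_of_norm_lt (hl : ‖a‖ < l) : l ∈ resolventSet ℝ a :=
  mem_resolventSet_of_norm_lt_mul <| calc
    ‖a‖ * ‖(1 : E →L[ℝ] E)‖ ≤ ‖a‖ := mul_le_of_le_one_right (norm_nonneg a) norm_id_le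
    _ < ‖l‖ := hl.trans_le (le_abs_self l)

lemma resolvent_sub_mem_nonnegOperators {c : ℝ} (hl : l ∈ resolventSet ℝ a)
    (hR : resolvent a l ∈ C.nonnegOperators) (hc : 0 ≤ c) (hcR : c * ‖resolvent a l‖ < 1) :
    resolvent a (l - c) ∈ C.nonnegOperators := by
  obtain ⟨u, hu⟩ := mem_resolventSet_iff.mp hl
  have hRu : resolvent a l = ↑u⁻¹ := by rw [resolvent, ← hu, Ring.inverse_unit]
  set R := resolvent a l
  have ht : ‖c • R‖ < 1 := by rwa [norm_smul, Real.norm_of_nonneg hc]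
  have hfactor : ((u * Units.oneSub (c • R) ht : (E →L[ℝ] E)ˣ) : E →L[ℝ] E) =
      algebraMap ℝ (E →L[ℝ] E) (l - c) - a := by
    rw [Units.val_mul, Units.val_oneSub, mul_sub, mul_one, mul_smul_comm, hRu, Units.mul_inv, hu,
      map_sub, Algebra.algebraMap_eq_smul_one c]
    abel
  have hneumann : resolvent a (l - c) = (∑' n, (c • R) ^ n) * R := by
    rw [resolvent, ← hfactor, Ring.inverse_unit, mul_inv_rev, Units.val_mul, ← hRu]
    rfl
  rw [hneumann]
  exact ProperCone.mul_mem_nonnegOperators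
    (tsum_mem C.nonnegOperators.isClosed fun n =>
      ProperCone.pow_mem_nonnegOperators (C.nonnegOperators.smul_mem hR hc) n) hR

lemma resolvent_mem_nonnegOperators_of_gt {τ L : ℝ} (hτ : Ioi τ ⊆ resolventSet ℝ a)
    (hL : ∀ l > L, resolvent a l ∈ C.nonnegOperators) :
    ∀ l > τ, resolvent a l ∈ C.nonnegOperators := by
  intro b hb
  set G := Ici b ∩ resolvent a ⁻¹' C.nonnegOperators
  have hcont : ContinuousOn (resolvent a) (Ici b) := fun l hl =>
    (hasDerivAt_resolvent_const_left (hτ (hb.trans_le hl))).continuousAt.continuousWithinAt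
  have hbdd : BddBelow G := ⟨b, fun _ hl => hl.1⟩
  obtain ⟨hbm : b ≤ sInf G, hm⟩ : sInf G ∈ G :=
    (hcont.preimage_isClosed_of_isClosed isClosed_Ici C.nonnegOperators.isClosed).csInf_mem
      ⟨max b L + 1, by simp only [mem_Ici]; linarith [le_max_left b L],
        hL _ (by linarith [le_max_right b L])⟩ hbdd
  set m := sInf G
  rcases hbm.eq_or_lt with hbm | hbm
  · rwa [hbm]
  set c := min (m - b) (‖resolvent a m‖ + 1)⁻¹
  have hc : 0 < c := lt_min (sub_pos.2 hbm) (by positivity)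
  have hcR : c * ‖resolvent a m‖ < 1 := calc
    c * ‖resolvent a m‖ ≤ (‖resolvent a m‖ + 1)⁻¹ * ‖resolvent a m‖ := by
      gcongr; exact min_le_right _ _
    _ < 1 := by rw [inv_mul_lt_one₀ (by positivity)]; linarith
  have hmc : m - c ∈ G := ⟨mem_Ici.2 (by linarith [(min_le_left _ _ : c ≤ m - b)]),
    resolvent_sub_mem_nonnegOperators (hτ (hb.trans hbm)) hm hc.le hcR⟩
  linarith [(csInf_le hbdd hmc : m ≤ m - c)]

end NormedSpace

section InnerProductSpace

variable {E : Type*} [NormedAddCommGroup E] [InnerProductSpace ℝ E] [CompleteSpace E]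

lemma ProperCone.exists_mem_sub_mem_dualCone (C : ProperCone ℝ E) (y : E) :
    ∃ p ∈ C, p - y ∈ dualCone (C : Set E) ∧ ⟪p - y, p⟫ = 0 := by
  obtain ⟨p, hp, hmin⟩ := exists_norm_eq_iInf_of_complete_convex C.nonempty
    C.isClosed.isComplete C.convex y
  have hproj := (norm_eq_iInf_iff_real_inner_le_zero C.convex hp).1 hmin
  have hdual : p - y ∈ dualCone (C : Set E) := fun z hz => by
    have := hproj (p + z) (C.add_mem hp hz)
    rw [add_sub_cancel_left, ← neg_sub p y, inner_neg_left] at this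
    linarith
  refine ⟨p, hp, hdual, le_antisymm ?_ (hdual p hp)⟩
  have := hproj 0 C.zero_mem
  rwa [zero_sub, inner_neg_right, ← neg_sub p y, inner_neg_left, neg_neg] at this

variable {C : ProperCone ℝ E} {a : E →L[ℝ] E} {l : ℝ}

lemma mem_of_smul_sub_mem (hq : IsQMI (C : Set E) a) (hl : ‖a‖ < l) {y : E}
    (hy : l • y - a y ∈ C) : y ∈ C := by
  obtain ⟨p, hp, hv, hvp⟩ := C.exists_mem_sub_mem_dualCone y
  set v := p - y
  have hyv : y = p - v := by simp [v]
  have hap : 0 ≤ ⟪v, a p⟫ := hq p hp v hv hvp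
  have hav : ⟪v, a v⟫ ≤ ‖a‖ * ‖v‖ ^ 2 := calc
    ⟪v, a v⟫ ≤ ‖v‖ * ‖a v‖ := real_inner_le_norm _ _
    _ ≤ ‖v‖ * (‖a‖ * ‖v‖) := by gcongr; exact a.le_opNorm v
    _ = ‖a‖ * ‖v‖ ^ 2 := by ring
  have hvy := hv _ hy
  rw [hyv, map_sub, inner_sub_right, inner_sub_right, real_inner_smul_right, inner_sub_right,
    hvp, real_inner_self_eq_norm_sq] at hvy
  have hv0 : ‖v‖ ^ 2 ≤ 0 :=
    le_of_mul_le_mul_left (by linarith : (l - ‖a‖) * ‖v‖ ^ 2 ≤ (l - ‖a‖) * 0) (sub_pos.2 hl)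
  simp only [sq_nonpos_iff, norm_eq_zero, v, sub_eq_zero] at hv0
  rwa [← hv0]

lemma resolvent_mem_nonnegOperators_of_norm_lt (hq : IsQMI (C : Set E) a) (hl : ‖a‖ < l) :
    resolvent a l ∈ C.nonnegOperators :=
  fun x hx => mem_of_smul_sub_mem hq hl <| by
    rwa [smul_sub_apply_resolvent_apply (ContinuousLinearMap.mem_resolventSet_of_norm_lt hl) x]

open ContinuousLinearMap in
lemma resolvent_adjoint (a : E →L[ℝ] E) (l : ℝ) :
    resolvent (adjoint a) l = adjoint (resolvent a l) := by
  rw [← star_eq_adjoint, ← star_eq_adjoint, resolvent, resolvent, ← Ring.inverse_star, star_sub,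
    ← algebraMap_star_comm, star_trivial l]

lemma mapsTo_adjoint_dualCone {K : Set E} {T : E →L[ℝ] E} (hT : MapsTo T K K) :
    MapsTo (ContinuousLinearMap.adjoint T) (dualCone K) (dualCone K) := fun v hv x hx => by
  rw [ContinuousLinearMap.adjoint_inner_left]
  exact hv _ (hT hx)

lemma tendsto_smul_resolvent_atTop (a : E →L[ℝ] E) :
    Tendsto (fun l : ℝ => l • resolvent a l) atTop (𝓝 1) := by
  have hR : Tendsto (resolvent a) atTop (𝓝 0) :=
    (resolvent_tendsto_cobounded a).mono_left (IsOrderBornology.atTop_le_cobounded (α := ℝ))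
  have hlim : Tendsto (fun l : ℝ => 1 + resolvent a l * a) atTop (𝓝 1) := by
    simpa using (hR.mul_const a).const_add 1
  refine hlim.congr' ?_
  filter_upwards [eventually_gt_atTop ‖a‖] with l hl
  have h := Ring.inverse_mul_cancel _
    (mem_resolventSet_iff.mp (ContinuousLinearMap.mem_resolventSet_of_norm_lt hl))
  rw [← resolvent, mul_sub, Algebra.algebraMap_eq_smul_one, mul_smul_comm, mul_one] at h
  rw [← h]
  abel

lemma isQMI_of_eventually_mapsTo_resolvent_adjoint {K : Set E}
    (h : ∀ᶠ l : ℝ in atTop, MapsTo ⇑(resolvent (ContinuousLinearMap.adjoint a) l)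
      (dualCone K) (dualCone K)) :
    IsQMI K (a : E →ₗ[ℝ] E) := by
  intro x hx v hv hvx
  set b := ContinuousLinearMap.adjoint a
  have hlim : Tendsto (fun l : ℝ => l • resolvent b l v) atTop (𝓝 v) := by
    simpa [Function.comp_def] using
      ((continuous_eval_const v).tendsto _).comp (tendsto_smul_resolvent_atTop b)
  refine ge_of_tendsto (hlim.inner tendsto_const_nhds) ?_
  filter_upwards [h, eventually_gt_atTop ‖b‖, eventually_ge_atTop 0] with l hl hlb hl0
  set w := resolvent b l v
  have hbw : b w = l • w - v := by
    rw [← smul_sub_apply_resolvent_apply (ContinuousLinearMap.mem_resolventSet_of_norm_lt hlb) v]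
    abel
  have hwax : ⟪w, a x⟫ = l * ⟪w, x⟫ := by
    rw [← ContinuousLinearMap.adjoint_inner_left, hbw, inner_sub_left, real_inner_smul_left, hvx,
      sub_zero]
  rw [real_inner_smul_left]
  exact mul_nonneg hl0 (hwax ▸ mul_nonneg hl0 (hl hv x hx))

end InnerProductSpace

lemma cSpectrum_finite (A : V →ₗ[ℝ] V) : (cSpectrum A).Finite :=
  (Polynomial.finite_setOfPred_isRoot
    ((LinearMap.charpoly_monic A).map (algebraMap ℝ ℂ)).ne_zero).subset
    fun z (hz : Polynomial.aeval z A.charpoly = 0) => by simpa [Polynomial.eval_map_algebraMap]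

lemma le_specBound_of_mem_spectrum {A : V →ₗ[ℝ] V} {l : ℝ} (hl : l ∈ spectrum ℝ A) :
    l ≤ specBound A := by
  have hroot := (Module.End.mem_spectrum_iff_isRoot_charpoly A l).1 hl
  have hmem : (l : ℂ) ∈ cSpectrum A := by
    change Polynomial.aeval (algebraMap ℝ ℂ l) A.charpoly = 0
    rw [Polynomial.aeval_algebraMap_apply_eq_algebraMap_eval, hroot.eq_zero, map_zero]
  exact le_csSup ((cSpectrum_finite A).image _).bddAbove ⟨l, hmem, rfl⟩

lemma mem_resolventSet_of_specBound_lt {a : V →L[ℝ] V} {l : ℝ}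
    (hl : specBound (a : V →ₗ[ℝ] V) < l) : l ∈ resolventSet ℝ a := by
  by_contra h
  exact (le_specBound_of_mem_spectrum (ContinuousLinearMap.spectrum_eq (f := a) ▸ h)).not_gt hl

lemma coe_smul_id_sub_adjoint (a : V →L[ℝ] V) (l : ℝ) :
    ⇑(l • (LinearMap.id : V →ₗ[ℝ] V) - LinearMap.adjoint (a : V →ₗ[ℝ] V)) =
      ⇑(algebraMap ℝ (V →L[ℝ] V) l - ContinuousLinearMap.adjoint a) := by
  ext x
  simp [Algebra.algebraMap_eq_smul_one, ContinuousLinearMap.adjoint_toLinearMap]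

lemma bijective_and_forall_mem_iff_mapsTo_resolvent_adjoint {a : V →L[ℝ] V} {l : ℝ}
    (hl : l ∈ resolventSet ℝ a) (S : Set V) :
    (Function.Bijective (l • (LinearMap.id : V →ₗ[ℝ] V) - LinearMap.adjoint (a : V →ₗ[ℝ] V)) ∧
      ∀ v, (l • (LinearMap.id : V →ₗ[ℝ] V) - LinearMap.adjoint (a : V →ₗ[ℝ] V)) v ∈ S → v ∈ S) ↔
      MapsTo ⇑(resolvent (ContinuousLinearMap.adjoint a) l) S S := by
  have hl' : l ∈ resolventSet ℝ (ContinuousLinearMap.adjoint a) := by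
    rwa [← ContinuousLinearMap.star_eq_adjoint, ← star_mem_resolventSet_iff, star_trivial]
  obtain ⟨u, hu⟩ := mem_resolventSet_iff.mp hl'
  rw [coe_smul_id_sub_adjoint, ← hu, resolvent, ← hu, Ring.inverse_unit]
  exact ContinuousLinearMap.bijective_and_forall_mem_iff_mapsTo_inv u S

/-- `A` is quasimonotone increasing w.r.t. `K` iff for every `λ > τ(A)` the map
`λ·id − A^⊤` is invertible and its inverse maps the dual cone `K*` into `K*`. -/
theorem qmi_iff_adjoint_resolvent_maps_dual_cone (K : Set V)
    (hK : IsGenProperClosedConvexCone K) (A : V →ₗ[ℝ] V) :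
    IsQMI K A ↔
      ∀ l : ℝ, specBound A < l →
        Function.Bijective (l • (LinearMap.id : V →ₗ[ℝ] V) - LinearMap.adjoint A) ∧
        ∀ v : V, (l • (LinearMap.id : V →ₗ[ℝ] V) - LinearMap.adjoint A) v ∈ dualCone K →
          v ∈ dualCone K := by
  obtain ⟨a, rfl⟩ : ∃ a : V →L[ℝ] V, (a : V →ₗ[ℝ] V) = A :=
    ⟨LinearMap.toContinuousLinearMap A, rfl⟩
  have hρ : Ioi (specBound (a : V →ₗ[ℝ] V)) ⊆ resolventSet ℝ a :=
    fun _ hl => mem_resolventSet_of_specBound_lt hl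
  refine ⟨fun hq l hl => ?_, fun h => isQMI_of_eventually_mapsTo_resolvent_adjoint ?_⟩
  · rw [bijective_and_forall_mem_iff_mapsTo_resolvent_adjoint (hρ hl), resolvent_adjoint]
    exact mapsTo_adjoint_dualCone <|
      resolvent_mem_nonnegOperators_of_gt (C := hK.toProperCone) hρ
        (fun _ hl => resolvent_mem_nonnegOperators_of_norm_lt hq hl) l hl
  · filter_upwards [eventually_gt_atTop (specBound (a : V →ₗ[ℝ] V))] with l hl
    exact (bijective_and_forall_mem_iff_mapsTo_resolvent_adjoint (hρ hl) _).1 (h l hl)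

end
end
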